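/- arXiv:1604.01199 — 3 statements merged into one kernel-verified Lean document; each statement's English description precedes it below -/
import Mathlib

section
/- Let A' ⊆ E ∪ {a, γ} and A = A' \ {a, γ}. If A' = A (i.e., a, γ ∉ A') and cl(A) contains no OX-circuit of M, then cl'(A') = cl(A). -/
open Set

namespace ESSplit

variable {α : Type*}

/-- A circuit of a matroid: a minimal dependent set. -/
def IsCircuit (M : Matroid α) (C : Set α) : Prop :=
  M.Dep C ∧ ∀ D, D ⊂ C → M.Indep D

/-- A binary matroid: one representable over GF(2). -/
def IsBinary (M : Matroid α) : Prop :=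
  ∃ (n : ℕ) (φ : α → (Fin n → ZMod 2)),
    ∀ I, I ⊆ M.E → (M.Indep I ↔ LinearIndependent (ZMod 2) (fun x : I => φ x.1))

/-- An OX-circuit: a circuit meeting `X` in an odd number of elements. -/
def IsOX (M : Matroid α) (X C : Set α) : Prop :=
  IsCircuit M C ∧ Odd (C ∩ X).ncard

/-- An EX-circuit: a circuit meeting `X` in an even number of elements. -/
def IsEX (M : Matroid α) (X C : Set α) : Prop :=
  IsCircuit M C ∧ Even (C ∩ X).ncard

/-- `D` is a union of two disjoint OX-circuits containing no EX-circuit. -/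
def OXUnion (M : Matroid α) (X D : Set α) : Prop :=
  ∃ C₁ C₂, IsOX M X C₁ ∧ IsOX M X C₂ ∧ Disjoint C₁ C₂ ∧ D = C₁ ∪ C₂ ∧
    ¬ ∃ C₀, IsEX M X C₀ ∧ C₀ ⊆ D

/-- The description of the circuits of the es-splitting matroid `M_X^e`. -/
def ESCircuit (M : Matroid α) (X : Set α) (e a γ : α) (C : Set α) : Prop :=
  C = {e, a, γ} ∨
  IsEX M X C ∨
  (OXUnion M X C ∧ ∀ D, OXUnion M X D → D ⊆ C → D = C) ∨
  (∃ C₀, IsOX M X C₀ ∧ C = C₀ ∪ {a}) ∨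
  (∃ C₀, IsOX M X C₀ ∧ e ∉ C₀ ∧ C = C₀ ∪ {e, γ}) ∨
  (∃ C₀, IsOX M X C₀ ∧ e ∈ C₀ ∧ C = (C₀ \ {e}) ∪ {γ}) ∨
  (∃ C₀, IsCircuit M C₀ ∧ e ∈ C₀ ∧ Odd (((C₀ \ {e}) ∩ X).ncard) ∧
      C = (C₀ \ {e}) ∪ {a, γ})

/-- `M'` is the es-splitting matroid `M_X^e` of `M` (with new elements `a`, `γ`):
it has ground set `M.E ∪ {a, γ}` and its circuits are exactly as described. -/
def IsESSplit (M M' : Matroid α) (X : Set α) (e a γ : α) : Prop :=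
  M'.E = M.E ∪ {a, γ} ∧ ∀ C, IsCircuit M' C ↔ ESCircuit M X e a γ C

/-- The set `T(A)`. -/
def T (M : Matroid α) (X : Set α) (e : α) (A : Set α) : Set α :=
  {x | x ∈ M.E \ A ∧ x ≠ e ∧ ∃ C, IsOX M X C ∧ x ∈ C ∧ e ∈ C ∧ C ⊆ A ∪ {e, x}}

/-- The set `F(A)`. -/
def F (M : Matroid α) (X A : Set α) : Set α :=
  {x | x ∈ M.closure A \ A ∧ ∃ C, IsOX M X C ∧ x ∈ C ∧ C ⊆ M.closure A}

/-- The rank of a set `A` in a (finite) matroid: the maximum size of an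
independent subset of `A`. -/
noncomputable def rk (M : Matroid α) (A : Set α) : ℕ :=
  sSup {n | ∃ I, M.Indep I ∧ I ⊆ A ∧ I.ncard = n}

end ESSplit

open ESSplit

/-!
A circuit of `M_X^e` through `x` inside `A + x` other than an EX-circuit of `M` always
leaves behind an OX-circuit `C₀` of `M` with `C₀ ⊆ A + e`: the new elements `a`, `γ` lie
outside `A`, so at most one of them can occur (as `x` itself), and of two disjoint
OX-circuits at most one can contain `x`. As `C₀ \ {e} ⊆ A`, the circuit `C₀` lies in
`cl(A)`, which is excluded. So both closures are spanned by the same circuits, the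
EX-circuits of `M`, which are circuits of both matroids.
-/

namespace ESSplit

variable {α : Type*} {M : Matroid α} {X A C : Set α} {e a γ x : α}

lemma isCircuit_iff_isCircuit {N : Matroid α} : IsCircuit N C ↔ N.IsCircuit C :=
  Matroid.isCircuit_iff_forall_ssubset.symm

lemma _root_.Matroid.IsCircuit.subset_closure_of_subset_insert (hC : M.IsCircuit C)
    (hCA : C ⊆ insert e A) : C ⊆ M.closure A :=
  (hC.subset_closure_sdiff_singleton e).trans
    (M.closure_subset_closure (sdiff_singleton_subset_iff.2 hCA))

lemma ESCircuit.isEX_or_exists_isOX_subset_insert (hC : ESCircuit M X e a γ C)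
    (hCA : C ⊆ insert x A) (haE : a ∉ M.E) (hγE : γ ∉ M.E) (haγ : a ≠ γ)
    (haA : a ∉ A) (hγA : γ ∉ A) :
    IsEX M X C ∨ ∃ C₀, IsOX M X C₀ ∧ C₀ ⊆ insert e A := by
  have eq_x : ∀ ⦃z⦄, z ∈ C → z ∉ A → z = x := fun z hz hzA => (hCA hz).resolve_right hzA
  have subset_A : ∀ ⦃D⦄, D ⊆ C → x ∉ D → D ⊆ A :=
    fun D hDC hxD => (subset_insert_iff_of_notMem hxD).1 (hDC.trans hCA)
  have notMem_of_isOX : ∀ ⦃C₀ z⦄, IsOX M X C₀ → z ∉ M.E → z ∉ C₀ :=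
    fun C₀ z hC₀ hz hzC₀ => hz (hC₀.1.1.subset_ground hzC₀)
  rcases hC with rfl | hEX | ⟨⟨C₁, C₂, hC₁, hC₂, hdisj, rfl, -⟩, -⟩ | ⟨C₀, hC₀, rfl⟩ |
      ⟨C₀, hC₀, -, rfl⟩ | ⟨C₀, hC₀, -, rfl⟩ | ⟨C₀, -, -, -, rfl⟩
  · exact absurd ((eq_x (by simp) haA).trans (eq_x (by simp) hγA).symm) haγ
  · exact Or.inl hEX
  · by_cases hxC₁ : x ∈ C₁
    · exact Or.inr ⟨C₂, hC₂, (subset_A subset_union_right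
        (disjoint_left.1 hdisj hxC₁)).trans (subset_insert _ _)⟩
    · exact Or.inr ⟨C₁, hC₁, (subset_A subset_union_left hxC₁).trans (subset_insert _ _)⟩
  · obtain rfl := eq_x (by simp) haA
    exact Or.inr ⟨C₀, hC₀,
      (subset_A subset_union_left (notMem_of_isOX hC₀ haE)).trans (subset_insert _ _)⟩
  · obtain rfl := eq_x (by simp) hγA
    exact Or.inr ⟨C₀, hC₀,
      (subset_A subset_union_left (notMem_of_isOX hC₀ hγE)).trans (subset_insert _ _)⟩
  · obtain rfl := eq_x (by simp) hγA
    exact Or.inr ⟨C₀, hC₀, sdiff_singleton_subset_iff.1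
      (subset_A subset_union_left fun h => notMem_of_isOX hC₀ hγE h.1)⟩
  · exact absurd ((eq_x (by simp) haA).trans (eq_x (by simp) hγA).symm) haγ

end ESSplit

theorem closure_eq_closure_general
    {α : Type*} (M M' : Matroid α) (X : Set α) (e a γ : α)
    (haE : a ∉ M.E) (hγE : γ ∉ M.E) (haγ : a ≠ γ)
    (hsplit : IsESSplit M M' X e a γ)
    (A' A : Set α) (hA'sub : A' ⊆ M.E ∪ {a, γ}) (hA : A = A' \ {a, γ})
    (hAA : A' = A) (hnoOX : ¬ ∃ C, IsOX M X C ∧ C ⊆ M.closure A) :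
    M'.closure A' = M.closure A := by
  obtain rfl := hAA.symm
  have haA : a ∉ A := fun h => (hA ▸ h).2 (by simp)
  have hγA : γ ∉ A := fun h => (hA ▸ h).2 (by simp)
  have hAE : A ⊆ M.E := fun y hy =>
    (hA'sub hy).resolve_right fun h => (hA ▸ hy).2 h
  ext x
  by_cases hxA : x ∈ A
  · exact iff_of_true (M'.subset_closure A (hAE.trans (hsplit.1 ▸ subset_union_left)) hxA)
      (M.subset_closure A hAE hxA)
  rw [Matroid.mem_closure_iff_exists_isCircuit hxA, Matroid.mem_closure_iff_exists_isCircuit hxA]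
  constructor
  · rintro ⟨C, hCA, hC, hxC⟩
    rcases ((hsplit.2 C).1 (isCircuit_iff_isCircuit.2 hC)).isEX_or_exists_isOX_subset_insert
      hCA haE hγE haγ haA hγA with hEX | ⟨C₀, hC₀, hC₀A⟩
    · exact ⟨C, hCA, isCircuit_iff_isCircuit.1 hEX.1, hxC⟩
    · exact (hnoOX ⟨C₀, hC₀,
        (isCircuit_iff_isCircuit.1 hC₀.1).subset_closure_of_subset_insert hC₀A⟩).elim
  · rintro ⟨C, hCA, hC, hxC⟩
    have hEX : IsEX M X C := ⟨isCircuit_iff_isCircuit.2 hC, Nat.not_odd_iff_even.1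
      fun hodd => hnoOX ⟨C, ⟨isCircuit_iff_isCircuit.2 hC, hodd⟩,
        hC.subset_closure_of_subset_insert hCA⟩⟩
    exact ⟨C, hCA, isCircuit_iff_isCircuit.1 ((hsplit.2 C).2 (Or.inr (Or.inl hEX))), hxC⟩

theorem closure_eq_closure
    {α : Type*} (M M' : Matroid α) (X : Set α) (e a γ : α)
    (hfin : M.E.Finite) (hbin : IsBinary M)
    (hXE : X ⊆ M.E) (heX : e ∈ X) (haE : a ∉ M.E) (hγE : γ ∉ M.E) (haγ : a ≠ γ)
    (hsplit : IsESSplit M M' X e a γ)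
    (A' A : Set α) (hA'sub : A' ⊆ M.E ∪ {a, γ}) (hA : A = A' \ {a, γ})
    (hAA : A' = A) (hnoOX : ¬ ∃ C, IsOX M X C ∧ C ⊆ M.closure A) :
    M'.closure A' = M.closure A :=
  closure_eq_closure_general M M' X e a γ haE hγE haγ hsplit A' A hA'sub hA hAA hnoOX
end

section
/- Let A' ⊆ E ∪ {a, γ} and A = A' \ {a, γ}. Suppose e ∉ cl(A) and either (1) A' = A and A contains an OX-circuit of M, or (2) A' = A ∪ {a}. Then cl'(A') = cl(A) ∪ {a}. -/
open Set

open ESSplit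

/-!
Every circuit `C` of `M` survives in `M_X^e`, as `C` itself when it is an EX-circuit and as
`C ∪ {a}` when it is an OX-circuit; hence `cl(A) ⊆ cl'(A ∪ {a})`. Under either alternative of the
hypothesis `a ∈ cl'(A')` (in the first one because `C ∪ {a}` is a circuit for an OX-circuit
`C ⊆ A`), which gives `cl(A) ∪ {a} ⊆ cl'(A')`. Conversely, take an
`M_X^e`-circuit `C'` with `x ∈ C' ⊆ A' ∪ {x}`. If `γ ∉ C'`, then `C'` contains an `M`-circuit
through `x` unless `x = a`, so `x ∈ cl(A)`. If `γ ∈ C'` then `x = γ`, and each circuit type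
through `γ` puts `e` into `cl(C' \ {γ}) ⊆ cl(A)`, which is excluded.
-/

namespace ESSplit

variable {α : Type*} {M M' : Matroid α} {X C C' A : Set α} {e a γ x : α}

lemma isCircuit_iff_isCircuit_s3 : IsCircuit M C ↔ M.IsCircuit C := by
  rw [Matroid.isCircuit_iff_forall_ssubset]
  rfl

lemma IsOX.isCircuit (h : IsOX M X C) : M.IsCircuit C :=
  isCircuit_iff_isCircuit_s3.1 h.1

lemma IsEX.isCircuit (h : IsEX M X C) : M.IsCircuit C :=
  isCircuit_iff_isCircuit_s3.1 h.1

lemma IsESSplit.isCircuit_iff (h : IsESSplit M M' X e a γ) :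
    M'.IsCircuit C ↔ ESCircuit M X e a γ C := by
  rw [← isCircuit_iff_isCircuit_s3, h.2]

lemma mem_closure_sdiff_of_isCircuit_subset (hC : M.IsCircuit C) (hx : x ∈ C) (hCC' : C ⊆ C') :
    x ∈ M.closure (C' \ {x}) :=
  M.closure_subset_closure (sdiff_subset_sdiff_left hCC')
    (hC.mem_closure_sdiff_singleton_of_mem hx)

lemma IsESSplit.mem_closure_insert_of_isCircuit (h : IsESSplit M M' X e a γ)
    (hC : M.IsCircuit C) (hx : x ∈ C) : x ∈ M'.closure (insert a (C \ {x})) := by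
  rcases Nat.even_or_odd (C ∩ X).ncard with hev | hodd
  · have hC' : M'.IsCircuit C :=
      h.isCircuit_iff.2 (Or.inr (Or.inl ⟨isCircuit_iff_isCircuit_s3.2 hC, hev⟩))
    exact M'.closure_subset_closure (subset_insert _ _) (hC'.mem_closure_sdiff_singleton_of_mem hx)
  · have hC' : M'.IsCircuit (C ∪ {a}) :=
      h.isCircuit_iff.2 (Or.inr (Or.inr (Or.inr (Or.inl
        ⟨C, ⟨isCircuit_iff_isCircuit_s3.2 hC, hodd⟩, rfl⟩))))
    refine M'.closure_subset_closure ?_ (hC'.mem_closure_sdiff_singleton_of_mem (Or.inl hx))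
    rintro y ⟨hy | rfl, hyx⟩
    · exact Or.inr ⟨hy, hyx⟩
    · exact Or.inl rfl

lemma IsESSplit.closure_subset_closure_insert (h : IsESSplit M M' X e a γ) (A : Set α) :
    M.closure A ⊆ M'.closure (insert a A) := by
  intro x hx
  by_cases hxA : x ∈ A
  · have hxE' : x ∈ M'.E := h.1 ▸ Or.inl (M.closure_subset_ground A hx)
    exact M'.mem_closure_of_mem' (Or.inr hxA) hxE'
  obtain ⟨C, hCA, hC, hxC⟩ := M.exists_isCircuit_of_mem_closure hx hxA
  refine M'.closure_subset_closure (insert_subset_insert ?_)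
    (h.mem_closure_insert_of_isCircuit hC hxC)
  rintro y ⟨hyC, hyx⟩
  exact (hCA hyC).resolve_left hyx

lemma IsESSplit.mem_closure_of_isOX_subset (h : IsESSplit M M' X e a γ) (hC : IsOX M X C)
    (hCA : C ⊆ A) : a ∈ M'.closure A := by
  have hC' : M'.IsCircuit (C ∪ {a}) :=
    h.isCircuit_iff.2 (Or.inr (Or.inr (Or.inr (Or.inl ⟨C, hC, rfl⟩))))
  refine M'.closure_subset_closure ?_ (hC'.mem_closure_sdiff_singleton_of_mem (Or.inr rfl))
  rintro y ⟨hy | rfl, hya⟩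
  · exact hCA hy
  · exact absurd rfl hya

lemma ESCircuit.mem_closure_of_gamma_notMem (hC' : ESCircuit M X e a γ C') (hγ : γ ∉ C')
    (hx : x ∈ C') (hxa : x ≠ a) : x ∈ M.closure (C' \ {x}) := by
  rcases hC' with rfl | hEX | ⟨⟨C₁, C₂, hC₁, hC₂, -, rfl, -⟩, -⟩ | ⟨C, hC, rfl⟩ |
    ⟨C, -, -, rfl⟩ | ⟨C, -, -, rfl⟩ | ⟨C, -, -, -, rfl⟩
  · simp at hγ
  · exact mem_closure_sdiff_of_isCircuit_subset hEX.isCircuit hx subset_rfl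
  · rcases hx with hx | hx
    · exact mem_closure_sdiff_of_isCircuit_subset hC₁.isCircuit hx subset_union_left
    · exact mem_closure_sdiff_of_isCircuit_subset hC₂.isCircuit hx subset_union_right
  · have hxC : x ∈ C := hx.resolve_right hxa
    exact mem_closure_sdiff_of_isCircuit_subset hC.isCircuit hxC subset_union_left
  all_goals simp at hγ

lemma ESCircuit.mem_closure_of_gamma_mem (hC' : ESCircuit M X e a γ C') (hγ : γ ∈ C')
    (heE : e ∈ M.E) (hγE : γ ∉ M.E) (haγ : a ≠ γ) : e ∈ M.closure (C' \ {γ}) := by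
  have heγ : e ≠ γ := by rintro rfl; exact hγE heE
  have hsub {C : Set α} (hC : M.IsCircuit C) (hCC' : C \ {e} ⊆ C') : C \ {e} ⊆ C' \ {γ} :=
    fun y hy ↦ ⟨hCC' hy, by rintro rfl; exact hγE (hC.subset_ground hy.1)⟩
  rcases hC' with rfl | hEX | ⟨⟨C₁, C₂, hC₁, hC₂, -, rfl, -⟩, -⟩ | ⟨C, hC, rfl⟩ |
    ⟨C, -, -, rfl⟩ | ⟨C, hC, heC, rfl⟩ | ⟨C, hC, heC, -, rfl⟩
  · exact M.mem_closure_of_mem' ⟨Or.inl rfl, heγ⟩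
  · exact absurd (hEX.isCircuit.subset_ground hγ) hγE
  · exact absurd ((union_subset hC₁.isCircuit.subset_ground hC₂.isCircuit.subset_ground) hγ) hγE
  · rcases hγ with hγ | hγ
    · exact absurd (hC.isCircuit.subset_ground hγ) hγE
    · exact absurd hγ.symm haγ
  · exact M.mem_closure_of_mem' ⟨Or.inr (Or.inl rfl), heγ⟩
  · exact M.closure_subset_closure (hsub hC.isCircuit subset_union_left)
      (hC.isCircuit.mem_closure_sdiff_singleton_of_mem heC)
  · rw [isCircuit_iff_isCircuit_s3] at hC
    exact M.closure_subset_closure (hsub hC subset_union_left)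
      (hC.mem_closure_sdiff_singleton_of_mem heC)

lemma IsESSplit.closure_subset_closure_union (h : IsESSplit M M' X e a γ) (heE : e ∈ M.E)
    (hγE : γ ∉ M.E) (haγ : a ≠ γ) (hγA : γ ∉ A) (heA : e ∉ M.closure A) :
    M'.closure A ⊆ M.closure A ∪ {a} := by
  intro x hx
  by_cases hxa : x = a
  · exact Or.inr hxa
  left
  by_cases hxA : x ∈ A
  · have hxE : x ∈ M.E := by
      have hxE' : x ∈ M'.E := M'.closure_subset_ground A hx
      rw [h.1] at hxE'
      rcases hxE' with hxE | rfl | rfl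
      · exact hxE
      · exact absurd rfl hxa
      · exact absurd hxA hγA
    exact M.mem_closure_of_mem' hxA hxE
  obtain ⟨C', hC'A, hC', hxC'⟩ := M'.exists_isCircuit_of_mem_closure hx hxA
  have hclosure {y : α} (hy : y = x) : M.closure (C' \ {y}) ⊆ M.closure A :=
    M.closure_subset_closure fun z ⟨hz, hzy⟩ ↦ (hC'A hz).resolve_left (hy ▸ hzy)
  by_cases hxγ : x = γ
  · exact absurd (hclosure hxγ.symm ((h.isCircuit_iff.1 hC').mem_closure_of_gamma_mem
      (hxγ ▸ hxC') heE hγE haγ)) heA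
  have hγC' : γ ∉ C' := fun hγ ↦ hγA ((hC'A hγ).resolve_left (Ne.symm hxγ))
  exact hclosure rfl ((h.isCircuit_iff.1 hC').mem_closure_of_gamma_notMem hγC' hxC' hxa)

end ESSplit

theorem closure_eq_closure_union_a_general
    {α : Type*} (M M' : Matroid α) (X : Set α) (e a γ : α)
    (hXE : X ⊆ M.E) (heX : e ∈ X) (haE : a ∉ M.E) (hγE : γ ∉ M.E) (haγ : a ≠ γ)
    (hsplit : IsESSplit M M' X e a γ)
    (A' A : Set α) (hA'sub : A' ⊆ M.E ∪ {a, γ}) (hA : A = A' \ {a, γ})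
    (heA : e ∉ M.closure A)
    (hcase : (A' = A ∧ ∃ C, IsOX M X C ∧ C ⊆ A) ∨ A' = A ∪ {a}) :
    M'.closure A' = M.closure A ∪ {a} := by
  have hA'E : A' ⊆ M'.E := hsplit.1 ▸ hA'sub
  have hcl : M.closure A' = M.closure A := by
    rw [← M.closure_inter_ground A', hA]
    congr 1
    ext y
    constructor
    · rintro ⟨hy, hyE⟩
      exact ⟨hy, by rintro (rfl | rfl) <;> contradiction⟩
    · rintro ⟨hy, hyaγ⟩
      exact ⟨hy, (hA'sub hy).resolve_right hyaγ⟩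
  have hA'A : A' ⊆ insert a A := by
    rcases hcase with ⟨rfl, -⟩ | rfl
    · exact subset_insert a _
    · rw [union_singleton]
  have hγA' : γ ∉ A' := fun hγ ↦ by
    rcases hA'A hγ with hγa | hγA
    · exact haγ hγa.symm
    · exact (hA ▸ hγA).2 (Or.inr rfl)
  have ha : a ∈ M'.closure A' := by
    rcases hcase with ⟨hA'A, C, hC, hCA⟩ | rfl
    · exact hsplit.mem_closure_of_isOX_subset hC (hCA.trans hA'A.symm.subset)
    · exact M'.mem_closure_of_mem' (Or.inr rfl) (hA'E (Or.inr rfl))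
  have hinsert : insert a A ⊆ M'.closure A' :=
    insert_subset ha ((hA ▸ sdiff_subset).trans (M'.subset_closure A' hA'E))
  refine subset_antisymm ?_ (union_subset ?_ (singleton_subset_iff.2 ha))
  · rw [← hcl]
    exact hsplit.closure_subset_closure_union (hXE heX) hγE haγ hγA' (hcl ▸ heA)
  · exact (hsplit.closure_subset_closure_insert A).trans
      (M'.closure_subset_closure_of_subset_closure hinsert)

theorem closure_eq_closure_union_a
    {α : Type*} (M M' : Matroid α) (X : Set α) (e a γ : α)
    (hfin : M.E.Finite) (hbin : IsBinary M)
    (hXE : X ⊆ M.E) (heX : e ∈ X) (haE : a ∉ M.E) (hγE : γ ∉ M.E) (haγ : a ≠ γ)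
    (hsplit : IsESSplit M M' X e a γ)
    (A' A : Set α) (hA'sub : A' ⊆ M.E ∪ {a, γ}) (hA : A = A' \ {a, γ})
    (heA : e ∉ M.closure A)
    (hcase : (A' = A ∧ ∃ C, IsOX M X C ∧ C ⊆ A) ∨ A' = A ∪ {a}) :
    M'.closure A' = M.closure A ∪ {a} :=
  closure_eq_closure_union_a_general M M' X e a γ hXE heX haE hγE haγ hsplit A' A hA'sub hA heA
    hcase
end

section
/- For every A ⊆ E: r'(A ∪ {a}) = r(A) + 1. -/
open Set

open ESSplit

section MyAux
variable {α : Type*}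

lemma myAux_exists_circuit (N : Matroid α) {S : Set α} (hS : S.Finite) (hSE : S ⊆ N.E)
    (hdep : ¬ N.Indep S) : ∃ C, C ⊆ S ∧ IsCircuit N C := by
  classical
  set K : Set ℕ := {k | ∃ D, D ⊆ S ∧ N.Dep D ∧ D.ncard = k} with hK
  have hne : K.Nonempty := ⟨S.ncard, S, Subset.rfl, ⟨hdep, hSE⟩, rfl⟩
  obtain ⟨D, hDS, hDdep, hDcard⟩ : ∃ D, D ⊆ S ∧ N.Dep D ∧ D.ncard = sInf K := Nat.sInf_mem hne
  refine ⟨D, hDS, hDdep, ?_⟩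
  intro D' hD'
  by_contra hind
  have hD'dep : N.Dep D' := ⟨hind, hD'.subset.trans (hDS.trans hSE)⟩
  have h1 : sInf K ≤ D'.ncard := Nat.sInf_le ⟨D', hD'.subset.trans hDS, hD'dep, rfl⟩
  have h2 : D'.ncard < D.ncard := Set.ncard_lt_ncard hD' (hS.subset hDS)
  omega

lemma myAux_max_indep (N : Matroid α) (hfin : N.E.Finite) (A : Set α) :
    ∃ B, N.Indep B ∧ B ⊆ A ∧ B.ncard = rk N A ∧
      ∀ J, N.Indep J → J ⊆ A → J.ncard ≤ rk N A := by
  set K := {n | ∃ I, N.Indep I ∧ I ⊆ A ∧ I.ncard = n} with hK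
  have hne : K.Nonempty := ⟨0, ∅, N.empty_indep, Set.empty_subset _, Set.ncard_empty _⟩
  have hbdd : BddAbove K := by
    refine ⟨N.E.ncard, ?_⟩
    rintro m ⟨I, hI, -, rfl⟩
    exact Set.ncard_le_ncard hI.subset_ground hfin
  have hrk : rk N A = sSup K := rfl
  have hmem : rk N A ∈ K := by rw [hrk]; exact Nat.sSup_mem hne hbdd
  obtain ⟨B, hB1, hB2, hB3⟩ := hmem
  exact ⟨B, hB1, hB2, hB3, fun J hJ hJA => by
    rw [hrk]; exact le_csSup hbdd ⟨J, hJ, hJA, rfl⟩⟩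

lemma myAux_not_indep_iff (M : Matroid α) {n : ℕ} (φ : α → Fin n → ZMod 2)
    (hφ : ∀ I, I ⊆ M.E → (M.Indep I ↔ LinearIndependent (ZMod 2) (fun x : I => φ x.1)))
    {S : Set α} (hS : S.Finite) (hSE : S ⊆ M.E) :
    ¬ M.Indep S ↔ ∃ T, T ⊆ S ∧ T.Nonempty ∧ ∑ᶠ x ∈ T, φ x = 0 := by
  classical
  rw [hφ S hSE]
  constructor
  · intro h
    obtain ⟨s, g, hsum, i₀, hi₀s, hi₀⟩ := not_linearIndependent_iff.mp h
    set t : Finset ↥S := s.filter (fun i => g i ≠ 0) with ht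
    have hone : ∀ x : ZMod 2, x ≠ 0 → x = 1 := by decide
    refine ⟨Subtype.val '' (↑t : Set ↥S), ?_, ⟨i₀, ⟨i₀, by simp [ht, hi₀s, hi₀], rfl⟩⟩, ?_⟩
    · rintro x ⟨i, -, rfl⟩; exact i.2
    · rw [finsum_mem_image (Set.injOn_of_injective Subtype.val_injective),
        finsum_mem_coe_finset]
      have : ∑ i ∈ t, φ ↑i = ∑ i ∈ t, g i • φ ↑i := by
        refine Finset.sum_congr rfl fun i hi => ?_
        rw [hone (g i) (Finset.mem_filter.mp hi).2, one_smul]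
      rw [this, ht, Finset.sum_filter_of_ne fun i _ hne => by
        intro h0; rw [h0, zero_smul] at hne; exact hne rfl]
      exact hsum
  · rintro ⟨T, hTS, hTne, hTsum⟩ hli
    obtain ⟨t, rfl⟩ : ∃ t : Finset α, (↑t : Set α) = T :=
      ⟨(hS.subset hTS).toFinset, Set.Finite.coe_toFinset _⟩
    have hli' : LinearIndependent (ZMod 2) (fun x : (↑t : Set α) => φ x.1) :=
      hli.comp (Set.inclusion hTS) (Set.inclusion_injective hTS)
    rw [finsum_mem_coe_finset] at hTsum
    obtain ⟨x₀, hx₀⟩ := hTne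
    have hnl : ¬ LinearIndependent (ZMod 2) (fun x : (↑t : Set α) => φ x.1) := by
      rw [Fintype.not_linearIndependent_iff]
      refine ⟨fun _ => 1, ?_, ⟨⟨x₀, hx₀⟩, one_ne_zero⟩⟩
      simp only [one_smul]
      rw [← Finset.sum_finset_coe (f := φ) (s := t)] at hTsum
      exact hTsum
    exact hnl hli'

lemma myAux_circuit_sum (M : Matroid α) (hfin : M.E.Finite) {n : ℕ} (φ : α → Fin n → ZMod 2)
    (hφ : ∀ I, I ⊆ M.E → (M.Indep I ↔ LinearIndependent (ZMod 2) (fun x : I => φ x.1)))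
    {C : Set α} (hC : IsCircuit M C) : ∑ᶠ x ∈ C, φ x = 0 := by
  have hCE : C ⊆ M.E := hC.1.2
  have hCfin : C.Finite := hfin.subset hCE
  obtain ⟨T, hTC, hTne, hTsum⟩ :=
    (myAux_not_indep_iff M φ hφ hCfin hCE).mp hC.1.1
  have hTC' : T = C := by
    by_contra hne
    have hTind : M.Indep T := hC.2 T (hTC.ssubset_of_ne hne)
    exact (myAux_not_indep_iff M φ hφ (hCfin.subset hTC) (hTC.trans hCE)).mpr
      ⟨T, Subset.rfl, hTne, hTsum⟩ hTind
  rwa [hTC'] at hTsum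

lemma myAux_sum_zero_circuit (M : Matroid α) (hfin : M.E.Finite) {n : ℕ}
    (φ : α → Fin n → ZMod 2)
    (hφ : ∀ I, I ⊆ M.E → (M.Indep I ↔ LinearIndependent (ZMod 2) (fun x : I => φ x.1)))
    {Z : Set α} (hZE : Z ⊆ M.E) (hZne : Z.Nonempty) (hZsum : ∑ᶠ x ∈ Z, φ x = 0) :
    ∃ C, C ⊆ Z ∧ IsCircuit M C :=
  myAux_exists_circuit M (hfin.subset hZE) hZE
    ((myAux_not_indep_iff M φ hφ (hfin.subset hZE) hZE).mpr ⟨Z, Subset.rfl, hZne, hZsum⟩)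

end MyAux


theorem rank_union_a_es_splitting
    {α : Type*} (M M' : Matroid α) (X : Set α) (e a γ : α)
    (hfin : M.E.Finite) (hbin : IsBinary M)
    (hXE : X ⊆ M.E) (heX : e ∈ X) (haE : a ∉ M.E) (hγE : γ ∉ M.E) (haγ : a ≠ γ)
    (hsplit : IsESSplit M M' X e a γ)
    (A : Set α) (hAE : A ⊆ M.E) :
    rk M' (A ∪ {a}) = rk M A + 1 := by
  classical
  obtain ⟨hE', hcirc⟩ := hsplit
  obtain ⟨n, φ, hφ⟩ := hbin
  have hpairfin : ({a, γ} : Set α).Finite := (Set.finite_singleton γ).insert a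
  have hfin' : M'.E.Finite := by rw [hE']; exact hfin.union hpairfin
  have hEE' : M.E ⊆ M'.E := by rw [hE']; exact Set.subset_union_left
  have haE' : a ∈ M'.E := by rw [hE']; exact Or.inr (Or.inl rfl)
  have hM'indep : ∀ S, S ⊆ M'.E → (∀ C, C ⊆ S → ¬ IsCircuit M' C) → M'.Indep S := by
    intro S hSE h
    by_contra hind
    obtain ⟨C, hCS, hC⟩ := myAux_exists_circuit M' (hfin'.subset hSE) hSE hind
    exact h C hCS hC
  obtain ⟨I₀, hI₀i, hI₀A, hI₀card, hAmax⟩ := myAux_max_indep M hfin A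
  have hI₀E : I₀ ⊆ M.E := hI₀i.subset_ground
  have haI₀ : a ∉ I₀ := fun h => haE (hI₀E h)
  have hIndep' : M'.Indep (I₀ ∪ {a}) := by
    refine hM'indep _ (Set.union_subset (hI₀E.trans hEE')
      (Set.singleton_subset_iff.mpr haE')) ?_
    intro C hCS hC
    have hγIa : γ ∉ I₀ ∪ {a} := by
      rintro (h | h)
      · exact hγE (hI₀E h)
      · exact haγ (Set.mem_singleton_iff.mp h).symm
    have hγC : γ ∉ C := fun h => hγIa (hCS h)
    have hsubI₀ : ∀ D : Set α, D ⊆ M.E → D ⊆ C → D ⊆ I₀ := by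
      intro D hDE hDC x hx
      rcases hCS (hDC hx) with h | h
      · exact h
      · exact absurd ((Set.mem_singleton_iff.mp h) ▸ hDE hx) haE
    rcases (hcirc C).mp hC with h | h | ⟨⟨C₁, C₂, h1, _h2, -, rfl, -⟩, -⟩ |
      ⟨C₀, hOX, rfl⟩ | ⟨C₀, hOX, he, rfl⟩ | ⟨C₀, hOX, he, rfl⟩ | ⟨C₀, hC₀, he, hodd, rfl⟩
    · exact hγC (by rw [h]; simp)
    · exact h.1.1.1 (hI₀i.subset (hsubI₀ C h.1.1.2 Subset.rfl))
    · exact h1.1.1.1 (hI₀i.subset (hsubI₀ C₁ h1.1.1.2 Set.subset_union_left))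
    · exact hOX.1.1.1 (hI₀i.subset (hsubI₀ C₀ hOX.1.1.2 Set.subset_union_left))
    · exact hγC (by simp)
    · exact hγC (by simp)
    · exact hγC (by simp)
  have hI₀fin : I₀.Finite := hfin.subset hI₀E
  have hcard₀ : (I₀ ∪ {a}).ncard = rk M A + 1 := by
    rw [Set.union_singleton, Set.ncard_insert_of_notMem haI₀ hI₀fin, hI₀card]
  have hrkdef : rk M' (A ∪ {a}) =
      sSup {m | ∃ I, M'.Indep I ∧ I ⊆ A ∪ {a} ∧ I.ncard = m} := rfl
  have hbdd' : BddAbove {m | ∃ I, M'.Indep I ∧ I ⊆ A ∪ {a} ∧ I.ncard = m} := by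
    refine ⟨M'.E.ncard, ?_⟩
    rintro m ⟨I, hI, -, rfl⟩
    exact Set.ncard_le_ncard hI.subset_ground hfin'
  have hge : rk M A + 1 ≤ rk M' (A ∪ {a}) := by
    rw [hrkdef]
    exact le_csSup hbdd' ⟨I₀ ∪ {a}, hIndep',
      Set.union_subset_union_left _ hI₀A, hcard₀⟩
  refine le_antisymm ?_ hge
  rw [hrkdef]
  refine csSup_le ⟨0, ∅, M'.empty_indep, Set.empty_subset _, Set.ncard_empty _⟩ ?_
  rintro m ⟨I, hI, hIsub, rfl⟩
  have hIfin : I.Finite := hfin'.subset hI.subset_ground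
  set J := I \ {a} with hJdef
  have hJA : J ⊆ A := by
    intro x hx
    rcases hIsub hx.1 with h | h
    · exact h
    · exact absurd h hx.2
  have hJE : J ⊆ M.E := hJA.trans hAE
  have hJfin : J.Finite := hIfin.subset Set.diff_subset
  have hJI : J ⊆ I := Set.diff_subset
  have hnoEX : ∀ C, C ⊆ I → ¬ IsEX M X C := by
    intro C hCI hEX
    have hC' : IsCircuit M' C := (hcirc C).mpr (Or.inr (Or.inl hEX))
    exact hC'.1.1 (hI.subset hCI)
  have hOXc : ∀ C, C ⊆ J → IsCircuit M C → IsOX M X C := by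
    intro C hCJ hC
    rcases Nat.even_or_odd (C ∩ X).ncard with hev | hod
    · exact absurd ⟨hC, hev⟩ (hnoEX C (hCJ.trans hJI))
    · exact ⟨hC, hod⟩
  have hnoTwo : ∀ C₁ C₂, C₁ ⊆ J → C₂ ⊆ J → IsOX M X C₁ → IsOX M X C₂ →
      Disjoint C₁ C₂ → False := by
    intro C₁ C₂ h1J h2J h1 h2 hdisj
    have hD₀I : C₁ ∪ C₂ ⊆ I := Set.union_subset (h1J.trans hJI) (h2J.trans hJI)
    have hOXU : OXUnion M X (C₁ ∪ C₂) :=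
      ⟨C₁, C₂, h1, h2, hdisj, rfl, fun ⟨C₀, hC₀, hC₀s⟩ => hnoEX C₀ (hC₀s.trans hD₀I) hC₀⟩
    set K := {k | ∃ D, (OXUnion M X D ∧ D ⊆ C₁ ∪ C₂) ∧ D.ncard = k} with hK
    have hKne : K.Nonempty := ⟨_, C₁ ∪ C₂, ⟨hOXU, Subset.rfl⟩, rfl⟩
    obtain ⟨D, ⟨hD, hDsub⟩, hDcard⟩ := Nat.sInf_mem hKne
    have hDfin : D.Finite := hIfin.subset (hDsub.trans hD₀I)
    have hDmin : ∀ D', OXUnion M X D' → D' ⊆ D → D' = D := by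
      intro D' hD' hsub
      by_contra hne
      have h1' : sInf K ≤ D'.ncard := Nat.sInf_le ⟨D', ⟨hD', hsub.trans hDsub⟩, rfl⟩
      have h2' : D'.ncard < D.ncard := Set.ncard_lt_ncard (hsub.ssubset_of_ne hne) hDfin
      omega
    have hC' : IsCircuit M' D := (hcirc D).mpr (Or.inr (Or.inr (Or.inl ⟨hD, hDmin⟩)))
    exact hC'.1.1 (hI.subset (hDsub.trans hD₀I))
  obtain ⟨B, hBi, hBJ, hBcard, hBmax⟩ := myAux_max_indep M hfin J
  have hBfin : B.Finite := hJfin.subset hBJ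
  have hsmall : (J \ B).ncard ≤ 1 := by
    by_contra hbig
    push_neg at hbig
    obtain ⟨x, y, hxJB, hyJB, hxy⟩ :=
      (Set.one_lt_ncard_iff (hJfin.subset Set.diff_subset)).mp hbig
    have hfund : ∀ z, z ∈ J \ B → ∃ Cz, Cz ⊆ insert z B ∧ IsCircuit M Cz ∧ z ∈ Cz := by
      intro z hz
      have hzB : insert z B ⊆ J := Set.insert_subset hz.1 hBJ
      have hdep : ¬ M.Indep (insert z B) := by
        intro hind
        have hle := hBmax _ hind hzB
        rw [Set.ncard_insert_of_notMem hz.2 hBfin, hBcard] at hle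
        omega
      obtain ⟨Cz, hCzB, hCz⟩ := myAux_exists_circuit M (hJfin.subset hzB) (hzB.trans hJE) hdep
      refine ⟨Cz, hCzB, hCz, ?_⟩
      by_contra hzC
      have hCzB' : Cz ⊆ B := fun w hw =>
        (Set.mem_insert_iff.mp (hCzB hw)).resolve_left (fun h => hzC (h ▸ hw))
      exact hCz.1.1 (hBi.subset hCzB')
    obtain ⟨Cx, hCxB, hCx, hxCx⟩ := hfund x hxJB
    obtain ⟨Cy, hCyB, hCy, hyCy⟩ := hfund y hyJB
    have hCxJ : Cx ⊆ J := hCxB.trans (Set.insert_subset hxJB.1 hBJ)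
    have hCyJ : Cy ⊆ J := hCyB.trans (Set.insert_subset hyJB.1 hBJ)
    have hCxOX := hOXc Cx hCxJ hCx
    have hCyOX := hOXc Cy hCyJ hCy
    have hsumx := myAux_circuit_sum M hfin φ hφ hCx
    have hsumy := myAux_circuit_sum M hfin φ hφ hCy
    set Z := (Cx \ Cy) ∪ (Cy \ Cx) with hZdef
    have hZJ : Z ⊆ J :=
      Set.union_subset (Set.diff_subset.trans hCxJ) (Set.diff_subset.trans hCyJ)
    have hxCy : x ∉ Cy := fun h => by
      rcases Set.mem_insert_iff.mp (hCyB h) with h' | h'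
      · exact hxy h'
      · exact hxJB.2 h'
    have hxZ : x ∈ Z := Or.inl ⟨hxCx, hxCy⟩
    have hCxfin : Cx.Finite := hJfin.subset hCxJ
    have hCyfin : Cy.Finite := hJfin.subset hCyJ
    have h2v : ∀ v : Fin n → ZMod 2, v + v = 0 := by
      intro v; funext i; exact (by decide : ∀ x : ZMod 2, x + x = 0) (v i)
    have key : ∀ u v : Fin n → ZMod 2, u + v = 0 → u = v := by
      intro u v huv
      have h' : u + (v + v) = 0 + v := by rw [← add_assoc, huv]
      rwa [h2v, add_zero, zero_add] at h'
    have hdisjx : Disjoint (Cx \ Cy) (Cx ∩ Cy) :=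
      Set.disjoint_of_subset_right Set.inter_subset_right Set.disjoint_sdiff_left
    have hdisjy : Disjoint (Cy \ Cx) (Cy ∩ Cx) :=
      Set.disjoint_of_subset_right Set.inter_subset_right Set.disjoint_sdiff_left
    have hsplitx : ∑ᶠ w ∈ Cx, φ w = (∑ᶠ w ∈ Cx \ Cy, φ w) + ∑ᶠ w ∈ Cx ∩ Cy, φ w := by
      rw [← finsum_mem_union hdisjx (hCxfin.subset Set.diff_subset)
        (hCxfin.subset Set.inter_subset_left), Set.diff_union_inter]
    have hsplity : ∑ᶠ w ∈ Cy, φ w = (∑ᶠ w ∈ Cy \ Cx, φ w) + ∑ᶠ w ∈ Cy ∩ Cx, φ w := by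
      rw [← finsum_mem_union hdisjy (hCyfin.subset Set.diff_subset)
        (hCyfin.subset Set.inter_subset_left), Set.diff_union_inter]
    have hdisjZ : Disjoint (Cx \ Cy) (Cy \ Cx) := by
      rw [Set.disjoint_left]
      rintro w ⟨-, hw2⟩ ⟨hw3, -⟩
      exact hw2 hw3
    have hsumZ : ∑ᶠ w ∈ Z, φ w = 0 := by
      rw [hZdef, finsum_mem_union hdisjZ (hCxfin.subset Set.diff_subset)
        (hCyfin.subset Set.diff_subset)]
      rw [hsplitx] at hsumx
      rw [hsplity] at hsumy
      have e1 := key _ _ hsumx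
      have e2 := key _ _ hsumy
      rw [Set.inter_comm Cy Cx] at e2
      rw [e1, e2]
      exact h2v _
    have hparity : Even ((Z ∩ X).ncard) := by
      have hxsplit : (Cx ∩ X).ncard = ((Cx \ Cy) ∩ X).ncard + ((Cx ∩ Cy) ∩ X).ncard := by
        rw [← Set.ncard_union_eq (hdisjx.mono Set.inter_subset_left Set.inter_subset_left)
          ((hCxfin.subset Set.diff_subset).subset Set.inter_subset_left)
          ((hCxfin.subset Set.inter_subset_left).subset Set.inter_subset_left),
          ← Set.union_inter_distrib_right, Set.diff_union_inter]
      have hysplit : (Cy ∩ X).ncard = ((Cy \ Cx) ∩ X).ncard + ((Cy ∩ Cx) ∩ X).ncard := by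
        rw [← Set.ncard_union_eq (hdisjy.mono Set.inter_subset_left Set.inter_subset_left)
          ((hCyfin.subset Set.diff_subset).subset Set.inter_subset_left)
          ((hCyfin.subset Set.inter_subset_left).subset Set.inter_subset_left),
          ← Set.union_inter_distrib_right, Set.diff_union_inter]
      have hzsplit : (Z ∩ X).ncard = ((Cx \ Cy) ∩ X).ncard + ((Cy \ Cx) ∩ X).ncard := by
        rw [hZdef, ← Set.ncard_union_eq (hdisjZ.mono Set.inter_subset_left Set.inter_subset_left)
          ((hCxfin.subset Set.diff_subset).subset Set.inter_subset_left)
          ((hCyfin.subset Set.diff_subset).subset Set.inter_subset_left),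
          ← Set.union_inter_distrib_right]
      have hox := hCxOX.2
      have hoy := hCyOX.2
      rw [Set.inter_comm Cy Cx] at hysplit
      rw [Nat.odd_iff] at hox hoy
      rw [Nat.even_iff]
      omega
    have hZE : Z ⊆ M.E := hZJ.trans hJE
    obtain ⟨C₁, hC₁Z, hC₁⟩ := myAux_sum_zero_circuit M hfin φ hφ hZE ⟨x, hxZ⟩ hsumZ
    have hC₁OX := hOXc C₁ (hC₁Z.trans hZJ) hC₁
    have hsumC₁ := myAux_circuit_sum M hfin φ hφ hC₁
    have hZfin : Z.Finite := hJfin.subset hZJ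
    have hsumZ' : ∑ᶠ w ∈ Z \ C₁, φ w = 0 := by
      have hsp : ∑ᶠ w ∈ Z, φ w = (∑ᶠ w ∈ C₁, φ w) + ∑ᶠ w ∈ Z \ C₁, φ w := by
        rw [← finsum_mem_union Set.disjoint_sdiff_right (hZfin.subset hC₁Z)
          (hZfin.subset Set.diff_subset), Set.union_diff_cancel hC₁Z]
      rw [hsumZ, hsumC₁, zero_add] at hsp
      exact hsp.symm
    have hodd' : Odd (((Z \ C₁) ∩ X).ncard) := by
      have hsp : (Z ∩ X).ncard = (C₁ ∩ X).ncard + ((Z \ C₁) ∩ X).ncard := by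
        rw [← Set.ncard_union_eq
          (Set.disjoint_sdiff_right.mono Set.inter_subset_left Set.inter_subset_left)
          ((hZfin.subset hC₁Z).subset Set.inter_subset_left)
          ((hZfin.subset Set.diff_subset).subset Set.inter_subset_left),
          ← Set.union_inter_distrib_right, Set.union_diff_cancel hC₁Z]
      have ho := hC₁OX.2
      rw [Nat.odd_iff] at ho ⊢
      rw [Nat.even_iff] at hparity
      omega
    have hZ'ne : (Z \ C₁).Nonempty := by
      rcases Set.eq_empty_or_nonempty (Z \ C₁) with h | h
      · rw [h] at hodd'
        simp [Nat.odd_iff] at hodd'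
      · exact h
    obtain ⟨C₂, hC₂Z, hC₂⟩ := myAux_sum_zero_circuit M hfin φ hφ
      ((Set.diff_subset.trans hZJ).trans hJE) hZ'ne hsumZ'
    have hC₂OX := hOXc C₂ ((hC₂Z.trans Set.diff_subset).trans hZJ) hC₂
    exact hnoTwo C₁ C₂ (hC₁Z.trans hZJ) ((hC₂Z.trans Set.diff_subset).trans hZJ)
      hC₁OX hC₂OX (Set.disjoint_sdiff_right.mono_right hC₂Z)
  by_cases haI : a ∈ I
  · have hJind : M.Indep J := by
      by_contra hdep
      obtain ⟨C, hCJ, hC⟩ := myAux_exists_circuit M hJfin hJE hdep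
      have hOX := hOXc C hCJ hC
      have hC' : IsCircuit M' (C ∪ {a}) :=
        (hcirc _).mpr (Or.inr (Or.inr (Or.inr (Or.inl ⟨C, hOX, rfl⟩))))
      exact hC'.1.1 (hI.subset (Set.union_subset (hCJ.trans hJI)
        (Set.singleton_subset_iff.mpr haI)))
    have hle := hAmax J hJind hJA
    have hcardI : J.ncard + 1 = I.ncard := Set.ncard_diff_singleton_add_one haI hIfin
    omega
  · have hJI' : J = I := by rw [hJdef, Set.diff_singleton_eq_self haI]
    have hcard : I.ncard = B.ncard + (J \ B).ncard := by
      rw [← hJI', ← Set.ncard_union_eq Set.disjoint_sdiff_right hBfin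
        (hJfin.subset Set.diff_subset), Set.union_diff_cancel hBJ]
    have hBle := hAmax B hBi (hBJ.trans hJA)
    omega
end
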